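/- Let h be a symmetric 4×4 real matrix (viewed as a self-adjoint operator on ℝ⁴) of the form h e₁ = ρe₁ + κe₃ + λe₄, h e₂ = ρe₂ + μe₃ + νe₄, h e₃ = κe₁ + μe₂ + σe₃, h e₄ = λe₁ + νe₂ + σe₄ with respect to an orthonormal basis {e₁,e₂,e₃,e₄}. If h has at most two distinct eigenvalues, each of multiplicity 2, then ν = κ and μ = −λ, or ν = −κ and μ = λ. -/

import Mathlib

/-!
In 2 × 2 blocks `h = [[ρ I, B], [Bᵀ, σ I]]`, and since the diagonal blocks are scalar,
`charpoly h = p² - ‖B‖² p + (det B)²` with `p = (X - ρ)(X - σ)`. Comparing the coefficients of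
`X³, X², X⁰` with those of `(X - a)²(X - b)²` forces `‖B‖⁴ = 4 (det B)²`, and
`‖B‖⁴ - 4 (det B)² = ((κ - ν)² + (λ + μ)²) ((κ + ν)² + (λ - μ)²)`.
-/

open Polynomial

theorem charpoly_eq_of_scalar_diagonal_blocks {R : Type*} [CommRing R] (ρ σ κ lam μ ν : R) :
    (!![ρ, 0, κ, lam; 0, ρ, μ, ν; κ, μ, σ, 0; lam, ν, 0, σ] : Matrix (Fin 4) (Fin 4) R).charpoly =
      ((X - C ρ) * (X - C σ)) ^ 2 - C (κ ^ 2 + lam ^ 2 + μ ^ 2 + ν ^ 2) * ((X - C ρ) * (X - C σ))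
        + C ((κ * ν - lam * μ) ^ 2) := by
  simp [Matrix.charpoly, Matrix.charmatrix_apply, Matrix.det_succ_row_zero, Fin.sum_univ_succ,
    Fin.succAbove, Fin.castSucc, Fin.castAdd, Fin.castLE]
  ring

theorem sq_eq_four_mul_of_sq_mul_sq_eq {K : Type*} [Field K] [NeZero (2 : K)]
    {a b c d T D : K}
    (h : (X - C a) ^ 2 * (X - C b) ^ 2
      = ((X - C c) * (X - C d)) ^ 2 - C T * ((X - C c) * (X - C d)) + C D) :
    T ^ 2 = 4 * D := by
  have lhs : (X - C a) ^ 2 * (X - C b) ^ 2 = X ^ 4 - C (2 * (a + b)) * X ^ 3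
      + C (a ^ 2 + 4 * (a * b) + b ^ 2) * X ^ 2 - C (2 * (a * b) * (a + b)) * X
      + C ((a * b) ^ 2) := by
    simp only [map_add, map_mul, map_pow, map_ofNat]
    ring
  have rhs : ((X - C c) * (X - C d)) ^ 2 - C T * ((X - C c) * (X - C d)) + C D
      = X ^ 4 - C (2 * (c + d)) * X ^ 3 + C ((c + d) ^ 2 + 2 * (c * d) - T) * X ^ 2
        - C ((2 * (c * d) - T) * (c + d)) * X + C ((c * d) ^ 2 - T * (c * d) + D) := by
    simp only [map_add, map_mul, map_sub, map_pow, map_ofNat]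
    ring
  rw [lhs, rhs] at h
  have h3 := congrArg (coeff · 3) h
  have h2 := congrArg (coeff · 2) h
  have h0 := congrArg (coeff · 0) h
  simp only [coeff_add, coeff_sub, coeff_C_mul, coeff_X_pow, coeff_C, coeff_mul_X] at h3 h2 h0
  norm_num at h3 h2 h0
  have hsum : a + b = c + d := h3.resolve_right two_ne_zero
  have hprod : 2 * (a * b) = 2 * (c * d) - T := by
    linear_combination h2 - (a + b + c + d) * hsum
  linear_combination 4 * h0 - (2 * (a * b) + 2 * (c * d) - T) * hprod

theorem eq_and_eq_neg_or_of_sum_sq_sq_eq {K : Type*} [Field K] [LinearOrder K]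
    [IsStrictOrderedRing K] {κ lam μ ν : K}
    (h : (κ ^ 2 + lam ^ 2 + μ ^ 2 + ν ^ 2) ^ 2 = 4 * (κ * ν - lam * μ) ^ 2) :
    (ν = κ ∧ μ = -lam) ∨ (ν = -κ ∧ μ = lam) := by
  have hfactor : ((κ - ν) ^ 2 + (lam + μ) ^ 2) * ((κ + ν) ^ 2 + (lam - μ) ^ 2) = 0 := by
    linear_combination h
  rcases mul_eq_zero.1 hfactor with h | h
  · left
    constructor <;> nlinarith [sq_nonneg (κ - ν), sq_nonneg (lam + μ)]
  · right
    constructor <;> nlinarith [sq_nonneg (κ + ν), sq_nonneg (lam - μ)]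

/-- A symmetric 4×4 matrix of the special shape, whose characteristic polynomial has at most
two distinct roots each of algebraic multiplicity 2, satisfies `ν = κ ∧ μ = -λ` or
`ν = -κ ∧ μ = λ`. -/
theorem shape_operator_two_eigenvalues (ρ σ κ lam μ ν : ℝ)
    (h : Matrix (Fin 4) (Fin 4) ℝ)
    (hdef : h = !![ρ, 0, κ, lam; 0, ρ, μ, ν; κ, μ, σ, 0; lam, ν, 0, σ])
    (heig : ∃ a b : ℝ, h.charpoly = (X - C a)^2 * (X - C b)^2) :
    (ν = κ ∧ μ = -lam) ∨ (ν = -κ ∧ μ = lam) := by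
  obtain ⟨a, b, hab⟩ := heig
  rw [hdef, charpoly_eq_of_scalar_diagonal_blocks] at hab
  exact eq_and_eq_neg_or_of_sum_sq_sq_eq (sq_eq_four_mul_of_sq_mul_sq_eq hab.symm)
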